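/- arXiv:2106.01659 — 3 statements merged into one kernel-verified Lean document; each statement's English description precedes it below -/
import Mathlib

section
/- The function f : ℝ² → ℝ defined by f(a,b) = (a²+b²)²/a² if |a| > |b| and f(a,b) = 4b² if |a| ≤ |b| is continuous. -/
open Classical in
noncomputable def sadowsky (x : ℝ × ℝ) : ℝ :=
  if |x.1| > |x.2| then (x.1 ^ 2 + x.2 ^ 2) ^ 2 / x.1 ^ 2 else 4 * x.2 ^ 2

noncomputable def sadAux (x : ℝ × ℝ) : ℝ :=
  (max (x.1 ^ 2) (x.2 ^ 2) - x.2 ^ 2) ^ 2 / max (x.1 ^ 2) (x.2 ^ 2)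

lemma sadAux_nonneg (x : ℝ × ℝ) : 0 ≤ sadAux x :=
  div_nonneg (sq_nonneg _) (le_max_of_le_left (sq_nonneg _))

lemma sadAux_le (x : ℝ × ℝ) : sadAux x ≤ max (x.1 ^ 2) (x.2 ^ 2) := by
  set M := max (x.1 ^ 2) (x.2 ^ 2) with hM
  have h0 : 0 ≤ M := le_max_of_le_left (sq_nonneg _)
  rcases h0.eq_or_lt with h | h
  · simp [sadAux, ← hM, ← h]
  · rw [sadAux, ← hM, div_le_iff₀ h]
    have h1 : x.2 ^ 2 ≤ M := le_max_right _ _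
    nlinarith [sq_nonneg x.2]

lemma sadAux_cont : Continuous sadAux := by
  rw [continuous_iff_continuousAt]
  intro x
  by_cases hx : max (x.1 ^ 2) (x.2 ^ 2) = 0
  · have hx1 : x.1 = 0 := by
      have := le_max_left (x.1 ^ 2) (x.2 ^ 2); nlinarith [sq_nonneg x.2]
    have hx2 : x.2 = 0 := by
      have := le_max_right (x.1 ^ 2) (x.2 ^ 2); nlinarith [sq_nonneg x.1]
    have h0 : sadAux x = 0 := by simp [sadAux, hx1, hx2]
    rw [ContinuousAt, h0]
    apply squeeze_zero sadAux_nonneg sadAux_le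
    have : Continuous fun y : ℝ × ℝ => max (y.1 ^ 2) (y.2 ^ 2) :=
      ((continuous_fst.pow 2).max (continuous_snd.pow 2))
    have := this.continuousAt (x := x)
    rwa [ContinuousAt, hx] at this
  · exact ContinuousAt.div
      ((((continuous_fst.pow 2).max (continuous_snd.pow 2)).sub (continuous_snd.pow 2)).pow 2).continuousAt
      ((continuous_fst.pow 2).max (continuous_snd.pow 2)).continuousAt hx

lemma sadowsky_eq (x : ℝ × ℝ) : sadowsky x = 4 * x.2 ^ 2 + sadAux x := by
  unfold sadowsky sadAux
  rcases lt_or_ge |x.2| |x.1| with h | h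
  · rw [if_pos h]
    have hmax : max (x.1 ^ 2) (x.2 ^ 2) = x.1 ^ 2 := by
      rw [max_eq_left]; rw [← sq_abs x.1, ← sq_abs x.2]
      exact pow_le_pow_left₀ (abs_nonneg _) h.le 2
    have h1 : x.1 ≠ 0 := by
      intro h0; rw [h0, abs_zero] at h; exact absurd h (abs_nonneg _).not_gt
    rw [hmax]
    field_simp
    ring
  · rw [if_neg (not_lt.mpr h)]
    have hmax : max (x.1 ^ 2) (x.2 ^ 2) = x.2 ^ 2 := by
      rw [max_eq_right]; rw [← sq_abs x.1, ← sq_abs x.2]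
      exact pow_le_pow_left₀ (abs_nonneg _) h 2
    rw [hmax]; simp

theorem sadowsky_continuous : Continuous sadowsky := by
  have : sadowsky = fun x => 4 * x.2 ^ 2 + sadAux x := funext sadowsky_eq
  rw [this]
  exact (continuous_const.mul (continuous_snd.pow 2)).add sadAux_cont
end

section
/- The function g₁(a,b) = (a²+b²)²/a² is convex on the open convex set {(a,b) ∈ ℝ² : a > |b|}. -/
theorem sadowsky_first_branch_convex :
    ConvexOn ℝ {x : ℝ × ℝ | |x.2| < x.1}
      (fun x : ℝ × ℝ => (x.1 ^ 2 + x.2 ^ 2) ^ 2 / x.1 ^ 2) := by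
  have hset : Convex ℝ {x : ℝ × ℝ | |x.2| < x.1} := by
    intro x hx y hy p q hp hq hpq
    simp only [Set.mem_setOf_eq] at *
    calc |(p • x + q • y).2| ≤ p * |x.2| + q * |y.2| := by
          simpa [abs_mul, abs_of_nonneg hp, abs_of_nonneg hq] using
            abs_add_le (p * x.2) (q * y.2)
      _ < p * x.1 + q * y.1 := by
          rcases eq_or_lt_of_le hp with hp0 | hp0
          · simpa [← hp0, (by linarith : q = 1)] using hy
          · rcases eq_or_lt_of_le hq with hq0 | hq0
            · simpa [← hq0, (by linarith : p = 1)] using hx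
            · have := mul_lt_mul_of_pos_left hx hp0
              have := mul_lt_mul_of_pos_left hy hq0
              linarith
      _ = (p • x + q • y).1 := rfl
  have h : ConvexOn ℝ {x : ℝ × ℝ | |x.2| < x.1}
      (fun x : ℝ × ℝ => (x.1 ^ 2 + x.2 ^ 2) / x.1) := by
    refine ⟨hset, ?_⟩
    rintro ⟨a₁, b₁⟩ hx ⟨a₂, b₂⟩ hy p q hp hq hpq
    simp only [Set.mem_setOf_eq] at hx hy
    have ha₁ : 0 < a₁ := lt_of_le_of_lt (abs_nonneg _) hx
    have ha₂ : 0 < a₂ := lt_of_le_of_lt (abs_nonneg _) hy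
    have hd : 0 < p * a₁ + q * a₂ := by
      rcases eq_or_lt_of_le hp with hp0 | hp0
      · have hq1 : q = 1 := by linarith
        simpa [← hp0, hq1] using ha₂
      · nlinarith
    simp only [Prod.smul_fst, Prod.smul_snd, Prod.fst_add, Prod.snd_add, smul_eq_mul]
    rw [mul_div_assoc', mul_div_assoc',
      div_add_div _ _ (by positivity : a₁ ≠ 0) (by positivity : a₂ ≠ 0),
      div_le_div_iff₀ hd (by positivity)]
    ring_nf
    nlinarith [mul_nonneg (mul_nonneg hp hq) (sq_nonneg (b₁ * a₂ - b₂ * a₁)),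
      mul_pos ha₁ ha₂, sq_nonneg (a₁ - a₂), mul_nonneg hp hq]
  have hnn : ∀ ⦃x : ℝ × ℝ⦄, x ∈ {x : ℝ × ℝ | |x.2| < x.1} →
      0 ≤ (x.1 ^ 2 + x.2 ^ 2) / x.1 := by
    intro x hx
    have ha : 0 < x.1 := lt_of_le_of_lt (abs_nonneg _) hx
    positivity
  have heq : ∀ x : ℝ × ℝ, (x.1 ^ 2 + x.2 ^ 2) ^ 2 / x.1 ^ 2
      = ((x.1 ^ 2 + x.2 ^ 2) / x.1) ^ 2 := fun x => (div_pow _ _ _).symm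
  refine ⟨hset, fun x hx y hy p q hp hq hpq => ?_⟩
  have hz := h.2 hx hy hp hq hpq
  have hz0 := hnn (hset hx hy hp hq hpq)
  simp only [smul_eq_mul, heq] at *
  nlinarith [sq_nonneg ((x.1 ^ 2 + x.2 ^ 2) / x.1 - (y.1 ^ 2 + y.2 ^ 2) / y.1),
    mul_nonneg hp hq, hnn hx, hnn hy, hz, hz0]
end

section
/- Suppose κ, τ : [0,L] → ℝ are smooth, κ never vanishes, and there exist μ : [0,L] → ℝ smooth and λ ∈ ℝ³ together with a smooth SO(3)-valued frame (t|n|b) satisfying t' = κ n, n' = -κ t + τ b, b' = -τ n, such that τ' = μ κ, λ·n = -κ' - μτ, and λ·b = μ'. Then there exists a constant c such that κ''/κ + (2τ/κ)(τ'/κ)' + (τ')²/κ² + (κ² + τ²)/2 = c on [0,L]. -/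
open Real Set

private lemma deriv_unique_on_Icc {L : ℝ} {f g : ℝ → ℝ} {a c s : ℝ}
    (hL : 0 < L) (hs : s ∈ Icc (0:ℝ) L)
    (hfg : ∀ u ∈ Icc (0:ℝ) L, f u = g u)
    (hf : HasDerivAt f a s) (hg : HasDerivAt g c s) : a = c := by
  have hU : UniqueDiffWithinAt ℝ (Icc (0:ℝ) L) s :=
    (uniqueDiffOn_Icc hL) s hs
  have h1 : HasDerivWithinAt g a (Icc (0:ℝ) L) s :=
    (hf.hasDerivWithinAt).congr (fun u hu => (hfg u hu).symm) (hfg s hs).symm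
  have h2 : HasDerivWithinAt g c (Icc (0:ℝ) L) s := hg.hasDerivWithinAt
  rw [← h1.derivWithin hU, ← h2.derivWithin hU]

/-- First integral for critical points of the energy `∫ (κ² + τ²)/2`. -/
theorem first_integral_biophysical_energy (L : ℝ) (hL : 0 < L)
    (κ τ μ : ℝ → ℝ)
    (hκ : ContDiff ℝ (⊤ : ℕ∞) κ) (hτ : ContDiff ℝ (⊤ : ℕ∞) τ) (hμ : ContDiff ℝ (⊤ : ℕ∞) μ)
    (hκne : ∀ s ∈ Icc (0 : ℝ) L, κ s ≠ 0)
    (lam : Fin 3 → ℝ)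
    (t n b : ℝ → Fin 3 → ℝ)
    (hsmooth : ∀ i : Fin 3, ContDiff ℝ (⊤ : ℕ∞) (fun s => t s i) ∧
      ContDiff ℝ (⊤ : ℕ∞) (fun s => n s i) ∧ ContDiff ℝ (⊤ : ℕ∞) (fun s => b s i))
    (hSO3 : ∀ s ∈ Icc (0 : ℝ) L,
      (Matrix.of fun i j => (![t s, n s, b s] j) i)
        ∈ Matrix.specialOrthogonalGroup (Fin 3) ℝ)
    (ht : ∀ s ∈ Icc (0 : ℝ) L, ∀ i : Fin 3,
      HasDerivAt (fun u => t u i) (κ s * n s i) s)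
    (hn : ∀ s ∈ Icc (0 : ℝ) L, ∀ i : Fin 3,
      HasDerivAt (fun u => n u i) (-κ s * t s i + τ s * b s i) s)
    (hb : ∀ s ∈ Icc (0 : ℝ) L, ∀ i : Fin 3,
      HasDerivAt (fun u => b u i) (-τ s * n s i) s)
    (heq1 : ∀ s ∈ Icc (0 : ℝ) L, deriv τ s = μ s * κ s)
    (heq2 : ∀ s ∈ Icc (0 : ℝ) L,
      (∑ i : Fin 3, lam i * n s i) = -deriv κ s - μ s * τ s)
    (heq3 : ∀ s ∈ Icc (0 : ℝ) L, (∑ i : Fin 3, lam i * b s i) = deriv μ s) :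
    ∃ c : ℝ, ∀ s ∈ Icc (0 : ℝ) L,
      deriv (deriv κ) s / κ s
        + (2 * τ s / κ s) * deriv (fun u => deriv τ u / κ u) s
        + (deriv τ s) ^ 2 / (κ s) ^ 2
        + ((κ s) ^ 2 + (τ s) ^ 2) / 2 = c := by
  classical
  set T : ℝ → ℝ := fun s => ∑ i : Fin 3, lam i * t s i with hTdef
  set N : ℝ → ℝ := fun s => ∑ i : Fin 3, lam i * n s i with hNdef
  have hκd : Differentiable ℝ κ := hκ.differentiable (by simp)
  have hτd : Differentiable ℝ τ := hτ.differentiable (by simp)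
  have hμd : Differentiable ℝ μ := hμ.differentiable (by simp)
  have hκ' : ContDiff ℝ ((⊤ : ℕ∞) : WithTop ℕ∞) (deriv κ) :=
    (contDiff_infty_iff_deriv.mp (hκ.of_le (by simp))).2
  have hτ' : ContDiff ℝ ((⊤ : ℕ∞) : WithTop ℕ∞) (deriv τ) :=
    (contDiff_infty_iff_deriv.mp (hτ.of_le (by simp))).2
  -- derivative of T and N
  have hT' : ∀ s ∈ Icc (0:ℝ) L, HasDerivAt T (κ s * N s) s := by
    intro s hs
    have h : HasDerivAt T (∑ i : Fin 3, lam i * (κ s * n s i)) s :=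
      HasDerivAt.fun_sum fun i _ => ((ht s hs i).const_mul (lam i))
    convert h using 1
    rw [hNdef, Finset.mul_sum]
    exact Finset.sum_congr rfl fun i _ => by ring
  have hN' : ∀ s ∈ Icc (0:ℝ) L,
      HasDerivAt N (-κ s * T s + τ s * (∑ i : Fin 3, lam i * b s i)) s := by
    intro s hs
    have h : HasDerivAt N (∑ i : Fin 3, lam i * (-κ s * t s i + τ s * b s i)) s :=
      HasDerivAt.fun_sum fun i _ => ((hn s hs i).const_mul (lam i))
    convert h using 1
    rw [hTdef, Finset.mul_sum, Finset.mul_sum, ← Finset.sum_add_distrib]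
    exact Finset.sum_congr rfl fun i _ => by ring
  -- key identity: κ T = κ'' + 2 τ μ' + μ τ'
  have hkey : ∀ s ∈ Icc (0:ℝ) L,
      κ s * T s = deriv (deriv κ) s + 2 * τ s * deriv μ s + μ s * deriv τ s := by
    intro s hs
    have hg : HasDerivAt (fun u => -deriv κ u - μ u * τ u)
        (-(deriv (deriv κ) s) - (deriv μ s * τ s + μ s * deriv τ s)) s := by
      exact ((hκ'.differentiable (by norm_num) s).hasDerivAt.neg).sub
        (((hμd s).hasDerivAt).mul ((hτd s).hasDerivAt))
    have h := deriv_unique_on_Icc hL hs heq2 (hN' s hs) hg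
    rw [heq3 s hs] at h
    linarith
  -- the conserved quantity
  set G : ℝ → ℝ := fun s => T s + (κ s ^ 2 + τ s ^ 2) / 2 with hGdef
  have hG' : ∀ s ∈ Icc (0:ℝ) L, HasDerivAt G 0 s := by
    intro s hs
    have h : HasDerivAt G (κ s * N s +
        ((2:ℕ) * κ s ^ 1 * deriv κ s + (2:ℕ) * τ s ^ 1 * deriv τ s) / 2) s :=
      (hT' s hs).add ((((hκd s).hasDerivAt.pow 2).add
        ((hτd s).hasDerivAt.pow 2)).div_const 2)
    have e : κ s * N s +
        ((2:ℕ) * κ s ^ 1 * deriv κ s + (2:ℕ) * τ s ^ 1 * deriv τ s) / 2 = 0 := by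
      simp only [hNdef]
      rw [heq2 s hs, heq1 s hs]; ring
    rwa [e] at h
  have hGconst : ∀ s ∈ Icc (0:ℝ) L, G s = G 0 := by
    intro s hs
    apply constant_of_has_deriv_right_zero (f := G) (a := (0:ℝ)) (b := L)
    · exact fun x hx => (hG' x hx).continuousAt.continuousWithinAt
    · exact fun x hx => ((hG' x (Ico_subset_Icc_self hx)).hasDerivWithinAt)
    · exact hs
  refine ⟨G 0, fun s hs => ?_⟩
  have hκs := hκne s hs
  -- deriv of (deriv τ / κ) equals deriv μ on Icc
  have hq : deriv (fun u => deriv τ u / κ u) s = deriv μ s := by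
    have hf : HasDerivAt (fun u => deriv τ u / κ u)
        ((deriv (deriv τ) s * κ s - deriv τ s * deriv κ s) / κ s ^ 2) s :=
      ((hτ'.differentiable (by norm_num) s).hasDerivAt).div ((hκd s).hasDerivAt) hκs
    have hfg : ∀ u ∈ Icc (0:ℝ) L, deriv τ u / κ u = μ u := by
      intro u hu
      rw [heq1 u hu, mul_div_assoc, div_self (hκne u hu), mul_one]
    have := deriv_unique_on_Icc hL hs hfg hf ((hμd s).hasDerivAt)
    rw [hf.deriv, this]
  rw [hq, heq1 s hs]
  have hk := hkey s hs
  rw [heq1 s hs] at hk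
  have hT : T s = deriv (deriv κ) s / κ s + 2 * τ s * deriv μ s / κ s + μ s ^ 2 := by
    field_simp at hk ⊢
    linarith [hk]
  rw [← hGconst s hs]
  show _ = T s + (κ s ^ 2 + τ s ^ 2) / 2
  rw [hT]
  field_simp
end
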